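/- Suppose S_0 = 1, S_T ≤ 1/2 almost surely, the transaction cost parameter satisfies λ < 1/3, and the local assumption holds (for every 0 < λ' ≤ λ, S admits a λ'-consistent local price system on [0,T]). Then for every λ-consistent local price system (Q, S̃) on [0,T] one has S̃_0 ≥ 1−λ and E_Q[S̃_T] ≤ (1+λ)/2; hence the fundamental value at time 0 satisfies F_0 = sup over such (Q,S̃) of E_Q[S̃_T] ≤ (1+λ)/2 < (1+λ)S_0, i.e. there is an asset price bubble at time 0. -/

import Mathlib

open MeasureTheory Filter Set

namespace TCBubbles

variable {Ω : Type*} {m0 : MeasurableSpace Ω}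

/-- `X` is a `Q`-martingale on the stochastic interval `⟦σ, T⟧`:
it is adapted and integrable on `[0, T]`, and the martingale equality
`E_Q[X_t | F_s] = X_s` holds a.e. on the event `{σ ≤ s}` for all `s ≤ t ≤ T`. -/
structure MartOn (F : Filtration ℝ m0) (Q : Measure Ω) (X : ℝ → Ω → ℝ)
    (σ : Ω → ℝ) (T : ℝ) : Prop where
  adapted : ∀ t ∈ Set.Icc (0 : ℝ) T, StronglyMeasurable[F t] (X t)
  integrable : ∀ t ∈ Set.Icc (0 : ℝ) T, Integrable (X t) Q
  mart : ∀ s t : ℝ, 0 ≤ s → s ≤ t → t ≤ T →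
    ∀ᵐ ω ∂Q, σ ω ≤ s → (Q[X t | F s]) ω = X s ω

/-- `X` is a local `Q`-martingale on `⟦σ, T⟧`: there are stopping times `τ n`
increasing a.s. to `T` such that each stopped process `X^{τ n}` is a
`Q`-martingale on `⟦σ, T⟧`. -/
def LocMartOn (F : Filtration ℝ m0) (Q : Measure Ω) (X : ℝ → Ω → ℝ)
    (σ : Ω → ℝ) (T : ℝ) : Prop :=
  (∀ t ∈ Set.Icc (0 : ℝ) T, StronglyMeasurable[F t] (X t)) ∧
  ∃ τs : ℕ → Ω → ℝ,
    (∀ n, IsStoppingTime F (fun ω => ((τs n ω : ℝ) : WithTop ℝ))) ∧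
    (∀ n ω, τs n ω ≤ τs (n + 1) ω) ∧
    (∀ᵐ ω ∂Q, Tendsto (fun n => τs n ω) atTop (nhds T)) ∧
    ∀ n, MartOn F Q (MeasureTheory.stoppedProcess X (fun ω => ((τs n ω : ℝ) : WithTop ℝ))) σ T

/-- `(Q, St)` is a `lam`-consistent (non-local, i.e. true martingale) price
system for `S` on the stochastic interval `⟦σ, T⟧`. -/
structure CPSOn (F : Filtration ℝ m0) (P : Measure Ω) (S : ℝ → Ω → ℝ)
    (σ : Ω → ℝ) (T lam : ℝ) (Q : Measure Ω) (St : ℝ → Ω → ℝ) : Prop where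
  prob : IsProbabilityMeasure Q
  ac : Q ≪ P
  ac' : P ≪ Q
  mart : MartOn F Q St σ T
  bidAsk : ∀ t ∈ Set.Icc (0 : ℝ) T, ∀ᵐ ω ∂P, σ ω ≤ t →
    (1 - lam) * S t ω ≤ St t ω ∧ St t ω ≤ (1 + lam) * S t ω

/-- `(Q, St)` is a `lam`-consistent local price system for `S` on `⟦σ, T⟧`. -/
structure CPSLocOn (F : Filtration ℝ m0) (P : Measure Ω) (S : ℝ → Ω → ℝ)
    (σ : Ω → ℝ) (T lam : ℝ) (Q : Measure Ω) (St : ℝ → Ω → ℝ) : Prop where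
  prob : IsProbabilityMeasure Q
  ac : Q ≪ P
  ac' : P ≪ Q
  locMart : LocMartOn F Q St σ T
  bidAsk : ∀ t ∈ Set.Icc (0 : ℝ) T, ∀ᵐ ω ∂P, σ ω ≤ t →
    (1 - lam) * S t ω ≤ St t ω ∧ St t ω ≤ (1 + lam) * S t ω

/-- The standing assumptions on the market model: `T > 0`, `P` a probability
measure, the filtration is right-continuous with `F_0` trivial and `F_T` the
full σ-algebra, and `S` is adapted with càdlàg strictly positive paths and
`S_t ∈ L¹(P)` for all `t ∈ [0, T]`. -/
structure MarketSetup (F : Filtration ℝ m0) (P : Measure Ω) (S : ℝ → Ω → ℝ)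
    (T : ℝ) : Prop where
  posT : 0 < T
  prob : IsProbabilityMeasure P
  filtration_rc : ∀ t : ℝ, (F t : MeasurableSpace Ω) = ⨅ s ∈ Set.Ioi t, (F s : MeasurableSpace Ω)
  F0_trivial : ∀ A : Set Ω, MeasurableSet[F 0] A → P A = 0 ∨ P A = 1
  FT_full : (F T : MeasurableSpace Ω) = m0
  adapted : ∀ t : ℝ, StronglyMeasurable[F t] (S t)
  rightCont : ∀ ω, ∀ t ∈ Set.Icc (0 : ℝ) T,
    ContinuousWithinAt (fun s => S s ω) (Set.Ici t) t
  leftLim : ∀ ω, ∀ t ∈ Set.Ioc (0 : ℝ) T,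
    ∃ l : ℝ, Tendsto (fun s => S s ω) (nhdsWithin t (Set.Iio t)) (nhds l)
  pos : ∀ ω, ∀ t ∈ Set.Icc (0 : ℝ) T, 0 < S t ω
  integrable : ∀ t ∈ Set.Icc (0 : ℝ) T, Integrable (S t) P

/-- The local assumption: for every `0 < lam' ≤ lam`, `S` admits a
`lam'`-consistent local price system on `[0, T]`. -/
def LocalAssumption (F : Filtration ℝ m0) (P : Measure Ω) (S : ℝ → Ω → ℝ)
    (T lam : ℝ) : Prop :=
  ∀ lam' : ℝ, 0 < lam' → lam' ≤ lam →
    ∃ Q St, CPSLocOn F P S (fun _ => 0) T lam' Q St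

/-- The non-local assumption: for every `0 < lam' ≤ lam`, `S` admits a
`lam'`-consistent (true martingale) price system on `[0, T]`. -/
def NonLocalAssumption (F : Filtration ℝ m0) (P : Measure Ω) (S : ℝ → Ω → ℝ)
    (T lam : ℝ) : Prop :=
  ∀ lam' : ℝ, 0 < lam' → lam' ≤ lam →
    ∃ Q St, CPSOn F P S (fun _ => 0) T lam' Q St

/-- `G` is the essential supremum (a.s. least upper bound) w.r.t. `P` of the
family of random variables `f i`, `i` ranging over `{i | p i}`. -/
def IsEssSupFam {ι : Sort*} (P : Measure Ω) (p : ι → Prop) (f : ι → Ω → ℝ)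
    (G : Ω → ℝ) : Prop :=
  AEStronglyMeasurable G P ∧
  (∀ i, p i → ∀ᵐ ω ∂P, f i ω ≤ G ω) ∧
    ∀ H : Ω → ℝ, (∀ i, p i → ∀ᵐ ω ∂P, f i ω ≤ H ω) → ∀ᵐ ω ∂P, G ω ≤ H ω

/-- `G` is the essential infimum (a.s. greatest lower bound) w.r.t. `P` of the
set `D` of random variables. -/
def IsEssInfSet (P : Measure Ω) (D : Set (Ω → ℝ)) (G : Ω → ℝ) : Prop :=
  AEStronglyMeasurable G P ∧
  (∀ X ∈ D, ∀ᵐ ω ∂P, G ω ≤ X ω) ∧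
    ∀ H : Ω → ℝ, (∀ X ∈ D, ∀ᵐ ω ∂P, H ω ≤ X ω) → ∀ᵐ ω ∂P, H ω ≤ G ω

/-- The predictable σ-algebra on `ℝ × Ω`, generated by sets `(s, t] × A` with
`A ∈ F_s` and `{0} × A` with `A ∈ F_0`. -/
def PredictableSigma (F : Filtration ℝ m0) : MeasurableSpace (ℝ × Ω) :=
  MeasurableSpace.generateFrom
    {C | (∃ s t : ℝ, ∃ A : Set Ω, s ≤ t ∧ MeasurableSet[F s] A ∧
            C = Set.Ioc s t ×ˢ A) ∨
         (∃ A : Set Ω, MeasurableSet[F 0] A ∧ C = ({0} : Set ℝ) ×ˢ A)}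

/-- A process is predictable if it is measurable w.r.t. the predictable
σ-algebra. -/
def PredictableProc (F : Filtration ℝ m0) (X : ℝ → Ω → ℝ) : Prop :=
  @Measurable (ℝ × Ω) ℝ (PredictableSigma F) _ (Function.uncurry X)

/-- The optional σ-algebra on `ℝ × Ω`, generated by the stochastic intervals
`⟦τ, ∞⟦` for stopping times `τ`. -/
def OptionalSigma (F : Filtration ℝ m0) : MeasurableSpace (ℝ × Ω) :=
  MeasurableSpace.generateFrom
    {C | ∃ τ : Ω → ℝ, IsStoppingTime F (fun ω => ((τ ω : ℝ) : WithTop ℝ)) ∧ C = {p : ℝ × Ω | τ p.2 ≤ p.1}}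

/-- A process is optional if it is measurable w.r.t. the optional σ-algebra. -/
def OptionalProc (F : Filtration ℝ m0) (X : ℝ → Ω → ℝ) : Prop :=
  @Measurable (ℝ × Ω) ℝ (OptionalSigma F) _ (Function.uncurry X)

/-- `(φ1, φ2)` is a self-financing strategy on `⟦σ, T⟧` for `S` with
proportional transaction costs `lam` and initial endowment `(X0, 0)`:
both components are predictable, and a.e. path admits a Jordan–Hahn
decomposition into non-decreasing parts starting at `0` at time `σ`, the
buy/sell increments being measured by measures `μu, μd` which satisfy the
self-financing inequality `dφ¹ ≤ (1-λ)S dφ²↓ - (1+λ)S dφ²↑` in integrated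
form. -/
structure SelfFinancingOn (F : Filtration ℝ m0) (P : Measure Ω)
    (S : ℝ → Ω → ℝ) (σ : Ω → ℝ) (T lam : ℝ) (X0 : Ω → ℝ)
    (φ1 φ2 : ℝ → Ω → ℝ) : Prop where
  pred1 : PredictableProc F φ1
  pred2 : PredictableProc F φ2
  jordan : ∀ᵐ ω ∂P, ∃ u1 d1 u2 d2 : ℝ → ℝ, ∃ μu μd : Measure ℝ,
    MonotoneOn u1 (Set.Icc (σ ω) T) ∧ MonotoneOn d1 (Set.Icc (σ ω) T) ∧
    MonotoneOn u2 (Set.Icc (σ ω) T) ∧ MonotoneOn d2 (Set.Icc (σ ω) T) ∧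
    u1 (σ ω) = 0 ∧ d1 (σ ω) = 0 ∧ u2 (σ ω) = 0 ∧ d2 (σ ω) = 0 ∧
    (∀ t ∈ Set.Icc (σ ω) T, φ1 t ω = X0 ω + u1 t - d1 t) ∧
    (∀ t ∈ Set.Icc (σ ω) T, φ2 t ω = u2 t - d2 t) ∧
    (∀ s ∈ Set.Icc (σ ω) T, ∀ t ∈ Set.Icc (σ ω) T, s ≤ t →
      μu (Set.Ioc s t) = ENNReal.ofReal (u2 t - u2 s) ∧
      μd (Set.Ioc s t) = ENNReal.ofReal (d2 t - d2 s)) ∧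
    (∀ s ∈ Set.Icc (σ ω) T, ∀ t ∈ Set.Icc (σ ω) T, s ≤ t →
      φ1 t ω - φ1 s ω ≤
        (∫ u in Set.Ioc s t, (1 - lam) * S u ω ∂μd) -
        (∫ u in Set.Ioc s t, (1 + lam) * S u ω ∂μu))

/-- The liquidation value of the portfolio `(a, b)` at time `t` in state `ω`. -/
def liqValue (S : ℝ → Ω → ℝ) (lam : ℝ) (t : ℝ) (ω : Ω) (a b : ℝ) : ℝ :=
  a + max b 0 * ((1 - lam) * S t ω) - max (-b) 0 * ((1 + lam) * S t ω)

/-- `(φ1, φ2)` is admissible in the numéraire-based sense on `⟦σ, T⟧`: there is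
a non-negative `F_σ`-measurable `M` which is `Q`-integrable for every `Q`
belonging to some `lam`-consistent local price system on `[0, T]`, such that
the liquidation value at every stopping time `τ` with `σ ≤ τ ≤ T` is a.s.
bounded below by `-M`. -/
def AdmissibleNB (F : Filtration ℝ m0) (P : Measure Ω) (S : ℝ → Ω → ℝ)
    (σ : Ω → ℝ) (mσ : MeasurableSpace Ω) (T lam : ℝ)
    (φ1 φ2 : ℝ → Ω → ℝ) : Prop :=
  ∃ M : Ω → ℝ, @Measurable Ω ℝ mσ _ M ∧ (∀ᵐ ω ∂P, 0 ≤ M ω) ∧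
    (∀ Q St, CPSLocOn F P S (fun _ => 0) T lam Q St → Integrable M Q) ∧
    ∀ τ : Ω → ℝ, IsStoppingTime F (fun ω => ((τ ω : ℝ) : WithTop ℝ)) → (∀ ω, σ ω ≤ τ ω ∧ τ ω ≤ T) →
      ∀ᵐ ω ∂P, -(M ω) ≤ liqValue S lam (τ ω) ω (φ1 (τ ω) ω) (φ2 (τ ω) ω)

/-- `Q` is an equivalent local martingale measure for `S` on `[0, T]`. -/
def MLocMeasure (F : Filtration ℝ m0) (P : Measure Ω) (S : ℝ → Ω → ℝ)
    (T : ℝ) (Q : Measure Ω) : Prop :=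
  IsProbabilityMeasure Q ∧ Q ≪ P ∧ P ≪ Q ∧ LocMartOn F Q S (fun _ => 0) T

/-- `X` is a semimartingale on `[0, T]`: it decomposes as
`X = X_0 + M + A` with `M` a local `P`-martingale and `A` an adapted process
of (pathwise) bounded variation, both starting at `0`. -/
def IsSemimartingaleOn (F : Filtration ℝ m0) (P : Measure Ω)
    (X : ℝ → Ω → ℝ) (T : ℝ) : Prop :=
  ∃ M A : ℝ → Ω → ℝ, LocMartOn F P M (fun _ => 0) T ∧
    (∀ t ∈ Set.Icc (0 : ℝ) T, StronglyMeasurable[F t] (A t)) ∧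
    (∀ᵐ ω ∂P, BoundedVariationOn (fun t => A t ω) (Set.Icc 0 T)) ∧
    (∀ᵐ ω ∂P, M 0 ω = 0 ∧ A 0 ω = 0) ∧
    ∀ t ∈ Set.Icc (0 : ℝ) T, ∀ᵐ ω ∂P, X t ω = X 0 ω + M t ω + A t ω


namespace CPSLocOn

variable {F : Filtration ℝ m0} {P Q : Measure Ω} {S St : ℝ → Ω → ℝ} {σ : Ω → ℝ}
  {T lam t : ℝ}

theorem one_sub_mul_le (h : CPSLocOn F P S σ T lam Q St) (ht : t ∈ Icc 0 T)
    (hσ : ∀ ω, σ ω ≤ t) : ∀ᵐ ω ∂P, (1 - lam) * S t ω ≤ St t ω := by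
  filter_upwards [h.bidAsk t ht] with ω hω using (hω (hσ ω)).1

theorem le_one_add_mul (h : CPSLocOn F P S σ T lam Q St) (ht : t ∈ Icc 0 T)
    (hσ : ∀ ω, σ ω ≤ t) : ∀ᵐ ω ∂P, St t ω ≤ (1 + lam) * S t ω := by
  filter_upwards [h.bidAsk t ht] with ω hω using (hω (hσ ω)).2

theorem integral_le_one_add_mul (h : CPSLocOn F P S σ T lam Q St) (ht : t ∈ Icc 0 T)
    (hσ : ∀ ω, σ ω ≤ t) (hlam₀ : -1 ≤ lam) (hlam₁ : lam ≤ 1)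
    (hS_nonneg : ∀ᵐ ω ∂P, 0 ≤ S t ω) {c : ℝ} (hSc : ∀ᵐ ω ∂P, S t ω ≤ c) :
    ∫ ω, St t ω ∂Q ≤ (1 + lam) * c := by
  have := h.prob
  have hQP : ae Q ≤ ae P := h.ac.ae_le
  have hSt_nonneg : ∀ᵐ ω ∂Q, 0 ≤ St t ω := by
    filter_upwards [(h.one_sub_mul_le ht hσ).filter_mono hQP,
      hS_nonneg.filter_mono hQP] with ω hlow hS
    nlinarith
  have hSt_le : ∀ᵐ ω ∂Q, St t ω ≤ (1 + lam) * c := by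
    filter_upwards [(h.le_one_add_mul ht hσ).filter_mono hQP,
      hSc.filter_mono hQP] with ω hup hS
    nlinarith
  -- Nonnegativity spares us proving that `St t` is `Q`-integrable.
  calc ∫ ω, St t ω ∂Q ≤ ∫ _, (1 + lam) * c ∂Q :=
        integral_mono_of_nonneg hSt_nonneg (integrable_const _) hSt_le
    _ = (1 + lam) * c := by simp

end CPSLocOn

theorem statement17_general
    (F : Filtration ℝ m0) (P : Measure Ω) (S : ℝ → Ω → ℝ) (T lam : ℝ)
    (hlam : lam ∈ Set.Ioo (0 : ℝ) 1) (hSetup : MarketSetup F P S T)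
    (hS0 : ∀ᵐ ω ∂P, S 0 ω = 1) (hST : ∀ᵐ ω ∂P, S T ω ≤ 1 / 2) :
    (∀ Q St, CPSLocOn F P S (fun _ => 0) T lam Q St →
      (∀ᵐ ω ∂P, 1 - lam ≤ St 0 ω) ∧ ∫ ω, St T ω ∂Q ≤ (1 + lam) / 2) ∧
    ∀ F0 : ℝ,
      IsLUB {x : ℝ | ∃ Q St, CPSLocOn F P S (fun _ => 0) T lam Q St ∧
        x = ∫ ω, St T ω ∂Q} F0 →
      F0 ≤ (1 + lam) / 2 ∧ F0 < (1 + lam) * 1 := by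
  have hT : T ∈ Icc 0 T := ⟨hSetup.posT.le, le_rfl⟩
  have bounds : ∀ Q St, CPSLocOn F P S (fun _ => 0) T lam Q St →
      (∀ᵐ ω ∂P, 1 - lam ≤ St 0 ω) ∧ ∫ ω, St T ω ∂Q ≤ (1 + lam) / 2 := by
    intro Q St h
    refine ⟨?_, ?_⟩
    · filter_upwards [h.one_sub_mul_le ⟨le_rfl, hSetup.posT.le⟩ (fun _ => le_rfl), hS0]
        with ω hlow hS
      simpa [hS] using hlow
    · have hS_nonneg : ∀ᵐ ω ∂P, 0 ≤ S T ω :=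
        ae_of_all _ fun ω => (hSetup.pos ω T hT).le
      simpa [div_eq_mul_one_div (1 + lam)] using
        h.integral_le_one_add_mul hT (fun _ => hSetup.posT.le) (by linarith [hlam.1]) hlam.2.le
          hS_nonneg hST
  refine ⟨bounds, fun F0 hF0 => ?_⟩
  have hF0_le : F0 ≤ (1 + lam) / 2 := hF0.2 fun x ⟨Q, St, h, hx⟩ => hx ▸ (bounds Q St h).2
  exact ⟨hF0_le, by linarith [hlam.1]⟩

/-- If `S_0 = 1`, `S_T ≤ 1/2` a.s., `λ < 1/3` and the local
assumption holds, then every `λ`-consistent local price system `(Q,S̃)` on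
`[0,T]` satisfies `S̃_0 ≥ 1-λ` a.s. and `E_Q[S̃_T] ≤ (1+λ)/2`; hence the
fundamental value at time `0` satisfies `F_0 ≤ (1+λ)/2 < (1+λ)S_0`, i.e.
there is an asset price bubble at time `0`. -/
theorem statement17
    (F : Filtration ℝ m0) (P : Measure Ω) (S : ℝ → Ω → ℝ) (T lam : ℝ)
    (hlam : lam ∈ Set.Ioo (0 : ℝ) 1) (hSetup : MarketSetup F P S T)
    (hLoc : LocalAssumption F P S T lam)
    (hS0 : ∀ᵐ ω ∂P, S 0 ω = 1) (hST : ∀ᵐ ω ∂P, S T ω ≤ 1 / 2)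
    (hlam3 : lam < 1 / 3) :
    (∀ Q St, CPSLocOn F P S (fun _ => 0) T lam Q St →
      (∀ᵐ ω ∂P, 1 - lam ≤ St 0 ω) ∧ ∫ ω, St T ω ∂Q ≤ (1 + lam) / 2) ∧
    ∀ F0 : ℝ,
      IsLUB {x : ℝ | ∃ Q St, CPSLocOn F P S (fun _ => 0) T lam Q St ∧
        x = ∫ ω, St T ω ∂Q} F0 →
      F0 ≤ (1 + lam) / 2 ∧ F0 < (1 + lam) * 1 :=
  statement17_general F P S T lam hlam hSetup hS0 hST

end TCBubbles
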